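/- arXiv:1302.4096 — 2 statements merged into one kernel-verified Lean document; each statement's English description precedes it below -/
import Mathlib

section
/- Let ψ: 𝔤 → A¹(Q) be a Lie algebra homomorphism from a finite-dimensional Lie algebra into vector fields on a manifold Q, and suppose in local curves that s ↦ γ_s(t) is a smooth two-parameter family in Q with (V_s(t))_Q(γ_s(t)) = ∂γ_s(t)/∂t and (δω(t))_Q(γ(t)) = ∂γ_s(t)/∂s |_{s=0}. Then the vector field in 𝔤 given by d(δω(t))/dt - δV(t) - [δω(t), V(t)] lies in the isotropy algebra 𝔤_{γ(t)} = {X ∈ 𝔤 : X_Q(γ(t)) = 0} for each t, where δV(t) = ∂V_s(t)/∂s |_{s=0}. -/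
/-- Chain rule for `(u) ↦ ψ (c u) (x u)` where `ψ` is linear into vector fields. -/
lemma psi_eval_hasDerivAt {F g : Type*} [NormedAddCommGroup F] [NormedSpace ℝ F]
    [NormedAddCommGroup g] [NormedSpace ℝ g] [FiniteDimensional ℝ g]
    (ψ : g →ₗ[ℝ] (F → F)) (hψ : ∀ X : g, ContDiff ℝ (⊤ : ℕ∞) (ψ X))
    {c : ℝ → g} {x : ℝ → F} {a : ℝ} {c' : g} {x' : F}
    (hc : HasDerivAt c c' a) (hx : HasDerivAt x x' a) :
    HasDerivAt (fun u => ψ (c u) (x u))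
      (ψ c' (x a) + fderiv ℝ (ψ (c a)) (x a) x') a := by
  classical
  set b := Module.finBasis ℝ g with hb
  have hrep : ∀ (X : g) (y : F), ψ X y = ∑ i, b.repr X i • ψ (b i) y := by
    intro X y
    conv_lhs => rw [← b.sum_repr X]
    rw [map_sum]
    simp [Finset.sum_apply, map_smul]
  have hφ : ∀ i, HasDerivAt (fun u => b.repr (c u) i) (b.repr c' i) a := by
    intro i
    have : HasDerivAt (fun u => ((b.coord i).toContinuousLinearMap : g →L[ℝ] ℝ) (c u))
        (((b.coord i).toContinuousLinearMap : g →L[ℝ] ℝ) c') a :=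
      ((b.coord i).toContinuousLinearMap.hasFDerivAt.comp_hasDerivAt a hc)
    simpa using this
  have hterm : ∀ i : Fin (Module.finrank ℝ g),
      HasDerivAt (fun u => b.repr (c u) i • ψ (b i) (x u))
        (b.repr (c a) i • fderiv ℝ (ψ (b i)) (x a) x' + b.repr c' i • ψ (b i) (x a)) a := by
    intro i
    have hv : HasDerivAt (fun u => ψ (b i) (x u)) (fderiv ℝ (ψ (b i)) (x a) x') a :=
      (((hψ (b i)).differentiable (by simp) (x a)).hasFDerivAt).comp_hasDerivAt a hx
    exact (hφ i).smul hv
  have hsum : HasDerivAt (fun u => ∑ i, b.repr (c u) i • ψ (b i) (x u))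
      (∑ i, (b.repr (c a) i • fderiv ℝ (ψ (b i)) (x a) x' + b.repr c' i • ψ (b i) (x a))) a :=
    HasDerivAt.fun_sum (fun i _ => hterm i)
  have h1 : (fun u => ∑ i, b.repr (c u) i • ψ (b i) (x u)) = fun u => ψ (c u) (x u) := by
    funext u; rw [← hrep]
  rw [h1] at hsum
  have h2 : fderiv ℝ (ψ (c a)) (x a) x' = ∑ i, b.repr (c a) i • fderiv ℝ (ψ (b i)) (x a) x' := by
    have hfun : ψ (c a) = fun y => ∑ i, b.repr (c a) i • ψ (b i) y := funext (hrep _)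
    have hdiff : ∀ i ∈ Finset.univ, DifferentiableAt ℝ
        (fun y => b.repr (c a) i • ψ (b i) y) (x a) :=
      fun i _ => ((hψ (b i)).differentiable (by simp) (x a)).const_smul _
    rw [hfun, fderiv_fun_sum hdiff]
    rw [ContinuousLinearMap.sum_apply]
    congr 1
    funext i
    rw [fderiv_fun_const_smul ((hψ (b i)).differentiable (by simp) (x a))]
    simp
  have h3 : ψ c' (x a) = ∑ i, b.repr c' i • ψ (b i) (x a) := hrep _ _
  have : (∑ i, (b.repr (c a) i • fderiv ℝ (ψ (b i)) (x a) x' + b.repr c' i • ψ (b i) (x a)))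
      = ψ c' (x a) + fderiv ℝ (ψ (c a)) (x a) x' := by
    rw [Finset.sum_add_distrib, ← h2, ← h3]; abel
  rwa [this] at hsum

/-- Let `ψ : 𝔤 → A¹(Q)` be a (linear) Lie algebra homomorphism from a
finite-dimensional Lie algebra (bracket `B`) into vector fields on `Q` (working in a
local chart, `Q` is an open piece of a vector space `F` and vector fields are maps
`F → F`, with the usual Lie bracket `VectorField.lieBracket`).  Let `(s,t) ↦ γ_s(t)`
be a smooth two-parameter family in `Q` with lifts `V_s(t) ∈ 𝔤` satisfying
`(V_s(t))_Q(γ_s(t)) = ∂γ_s(t)/∂t`, and let `δω(t) ∈ 𝔤` satisfy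
`(δω(t))_Q(γ(t)) = ∂γ_s(t)/∂s |_{s=0}` (where `γ = γ₀`).  Then, with
`δV(t) = ∂V_s(t)/∂s |_{s=0}`, the curve `d(δω(t))/dt - δV(t) - [δω(t), V(t)]` in `𝔤`
lies in the isotropy algebra `𝔤_{γ(t)} = {X : X_Q(γ(t)) = 0}` for each `t`. -/
theorem statement2 {F : Type*} [NormedAddCommGroup F] [NormedSpace ℝ F]
    {g : Type*} [NormedAddCommGroup g] [NormedSpace ℝ g] [FiniteDimensional ℝ g]
    (B : g →L[ℝ] g →L[ℝ] g)
    (hB_skew : ∀ X Y : g, B X Y = -B Y X)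
    (hB_jacobi : ∀ X Y Z : g, B (B X Y) Z + B (B Y Z) X + B (B Z X) Y = 0)
    (ψ : g →ₗ[ℝ] (F → F))
    (hhom : ∀ X Y : g, ψ (B X Y) = VectorField.lieBracket ℝ (ψ X) (ψ Y))
    (hψ : ∀ X : g, ContDiff ℝ (⊤ : ℕ∞) (ψ X))
    (γ : ℝ → ℝ → F) (hγ : ContDiff ℝ (⊤ : ℕ∞) (Function.uncurry γ))
    (V : ℝ → ℝ → g) (hV : ContDiff ℝ (⊤ : ℕ∞) (Function.uncurry V))
    (δω : ℝ → g) (hδω : ContDiff ℝ (⊤ : ℕ∞) δω)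
    (hlift : ∀ s t : ℝ, ψ (V s t) (γ s t) = deriv (fun u => γ s u) t)
    (hvar : ∀ t : ℝ, ψ (δω t) (γ 0 t) = deriv (fun s => γ s t) 0)
    (δV : ℝ → g) (hδV : ∀ t : ℝ, δV t = deriv (fun s => V s t) 0) :
    ∀ t : ℝ, ψ (deriv δω t - δV t - B (δω t) (V 0 t)) (γ 0 t) = 0 := by
  intro t
  set f := Function.uncurry γ with hf_def
  have hfd : Differentiable ℝ f := hγ.differentiable (by simp)
  -- partial derivatives of γ as directional derivatives of f
  have h_t : ∀ s u : ℝ, HasDerivAt (fun u => γ s u) (fderiv ℝ f (s, u) (0, 1)) u := by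
    intro s u
    have h1 : HasDerivAt (fun u : ℝ => ((s, u) : ℝ × ℝ)) ((0 : ℝ), (1 : ℝ)) u :=
      (hasDerivAt_const u s).prodMk (hasDerivAt_id u)
    exact (hfd (s, u)).hasFDerivAt.comp_hasDerivAt u h1
  have h_s : ∀ u : ℝ, HasDerivAt (fun s => γ s u) (fderiv ℝ f (0, u) (1, 0)) 0 := by
    intro u
    have h1 : HasDerivAt (fun s : ℝ => ((s, u) : ℝ × ℝ)) ((1 : ℝ), (0 : ℝ)) 0 :=
      (hasDerivAt_id (0:ℝ)).prodMk (hasDerivAt_const 0 u)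
    exact (hfd (0, u)).hasFDerivAt.comp_hasDerivAt 0 h1
  have e1 : ∀ s u : ℝ, ψ (V s u) (γ s u) = fderiv ℝ f (s, u) (0, 1) := fun s u =>
    (hlift s u).trans (h_t s u).deriv
  have e2 : ∀ u : ℝ, ψ (δω u) (γ 0 u) = fderiv ℝ f (0, u) (1, 0) := fun u =>
    (hvar u).trans (h_s u).deriv
  -- second derivative of f
  have hf' : ContDiff ℝ (⊤ : ℕ∞) (fderiv ℝ f) := hγ.fderiv_right (by simp)
  have hf'd : Differentiable ℝ (fderiv ℝ f) := hf'.differentiable (by simp)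
  set f'' := fderiv ℝ (fderiv ℝ f) (0, t) with hf''_def
  have hsym : f'' (0, 1) (1, 0) = f'' (1, 0) (0, 1) :=
    second_derivative_symmetric (fun y => (hfd y).hasFDerivAt)
      (hf'd (0, t)).hasFDerivAt _ _
  -- Chain A : t-derivative of `u ↦ ψ (δω u) (γ 0 u) = fderiv f (0,u) (1,0)`
  have hγ0t : HasDerivAt (fun u => γ 0 u) (ψ (V 0 t) (γ 0 t)) t := by
    rw [e1 0 t]; exact h_t 0 t
  have hδω't : HasDerivAt δω (deriv δω t) t :=
    ((hδω.differentiable (by simp)) t).hasDerivAt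
  have chainA : HasDerivAt (fun u => ψ (δω u) (γ 0 u))
      (ψ (deriv δω t) (γ 0 t) + fderiv ℝ (ψ (δω t)) (γ 0 t) (ψ (V 0 t) (γ 0 t))) t :=
    psi_eval_hasDerivAt ψ hψ hδω't hγ0t
  have rhsA : HasDerivAt (fun u => fderiv ℝ f (0, u) (1, 0)) (f'' (0, 1) (1, 0)) t := by
    have h1 : HasDerivAt (fun u : ℝ => ((0, u) : ℝ × ℝ)) ((0 : ℝ), (1 : ℝ)) t :=
      (hasDerivAt_const t (0:ℝ)).prodMk (hasDerivAt_id t)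
    have h2 : HasDerivAt (fun u => fderiv ℝ f (0, u)) (f'' (0, 1)) t :=
      (hf'd (0, t)).hasFDerivAt.comp_hasDerivAt t h1
    have h3 := h2.clm_apply (hasDerivAt_const t ((1:ℝ), (0:ℝ)))
    simpa using h3
  have EqA : ψ (deriv δω t) (γ 0 t) + fderiv ℝ (ψ (δω t)) (γ 0 t) (ψ (V 0 t) (γ 0 t))
      = f'' (0, 1) (1, 0) := by
    have hfun : (fun u => ψ (δω u) (γ 0 u)) = fun u => fderiv ℝ f (0, u) (1, 0) :=
      funext e2
    rw [hfun] at chainA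
    exact chainA.unique rhsA
  -- Chain B : s-derivative at 0 of `s ↦ ψ (V s t) (γ s t) = fderiv f (s,t) (0,1)`
  have hVst : HasDerivAt (fun s => V s t) (δV t) 0 := by
    have hd : DifferentiableAt ℝ (fun s => V s t) 0 := by
      have : DifferentiableAt ℝ (fun s : ℝ => ((s, t) : ℝ × ℝ)) 0 :=
        (differentiable_id.prodMk (differentiable_const t)) 0
      exact ((hV.differentiable (by simp)) (0, t)).comp 0 this
    rw [hδV t]; exact hd.hasDerivAt
  have hγst : HasDerivAt (fun s => γ s t) (ψ (δω t) (γ 0 t)) 0 := by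
    rw [e2 t]; exact h_s t
  have chainB : HasDerivAt (fun s => ψ (V s t) (γ s t))
      (ψ (δV t) (γ 0 t) + fderiv ℝ (ψ (V 0 t)) (γ 0 t) (ψ (δω t) (γ 0 t))) 0 :=
    psi_eval_hasDerivAt ψ hψ hVst hγst
  have rhsB : HasDerivAt (fun s => fderiv ℝ f (s, t) (0, 1)) (f'' (1, 0) (0, 1)) 0 := by
    have h1 : HasDerivAt (fun s : ℝ => ((s, t) : ℝ × ℝ)) ((1 : ℝ), (0 : ℝ)) 0 :=
      (hasDerivAt_id (0:ℝ)).prodMk (hasDerivAt_const 0 t)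
    have h2 : HasDerivAt (fun s => fderiv ℝ f (s, t)) (f'' (1, 0)) 0 :=
      (hf'd (0, t)).hasFDerivAt.comp_hasDerivAt 0 h1
    have h3 := h2.clm_apply (hasDerivAt_const 0 ((0:ℝ), (1:ℝ)))
    simpa using h3
  have EqB : ψ (δV t) (γ 0 t) + fderiv ℝ (ψ (V 0 t)) (γ 0 t) (ψ (δω t) (γ 0 t))
      = f'' (1, 0) (0, 1) := by
    have hfun : (fun s => ψ (V s t) (γ s t)) = fun s => fderiv ℝ f (s, t) (0, 1) :=
      funext fun s => e1 s t
    rw [hfun] at chainB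
    exact chainB.unique rhsB
  -- combine
  have hAB : ψ (deriv δω t) (γ 0 t) + fderiv ℝ (ψ (δω t)) (γ 0 t) (ψ (V 0 t) (γ 0 t))
      = ψ (δV t) (γ 0 t) + fderiv ℝ (ψ (V 0 t)) (γ 0 t) (ψ (δω t) (γ 0 t)) := by
    rw [EqA, EqB, hsym]
  have hbr : ψ (B (δω t) (V 0 t)) (γ 0 t)
      = fderiv ℝ (ψ (V 0 t)) (γ 0 t) (ψ (δω t) (γ 0 t))
        - fderiv ℝ (ψ (δω t)) (γ 0 t) (ψ (V 0 t) (γ 0 t)) := by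
    rw [hhom]; rfl
  have hexp : ψ (deriv δω t - δV t - B (δω t) (V 0 t)) (γ 0 t)
      = ψ (deriv δω t) (γ 0 t) - ψ (δV t) (γ 0 t) - ψ (B (δω t) (V 0 t)) (γ 0 t) := by
    simp [map_sub]
  rw [hexp, hbr]
  set a1 := ψ (deriv δω t) (γ 0 t)
  set a2 := fderiv ℝ (ψ (δω t)) (γ 0 t) (ψ (V 0 t) (γ 0 t))
  set a3 := ψ (δV t) (γ 0 t)
  set a4 := fderiv ℝ (ψ (V 0 t)) (γ 0 t) (ψ (δω t) (γ 0 t))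
  have : a1 - a3 - (a4 - a2) = (a1 + a2) - (a3 + a4) := by abel
  rw [this, hAB, sub_self]
end

section
/- Let G be a Lie group and ζ ∈ T*G. Then the intersection of the level sets (J^R)⁻¹(J^R(ζ)) ∩ (J^L)⁻¹(J^L(ζ)) equals { (T R_{γ⁻¹})ᵗ(ζ) : γ ∈ G_{J^R(ζ)} }, where G_{J^R(ζ)} is the isotropy subgroup of J^R(ζ) for the coadjoint action of G on 𝔤*. -/
/-! The `J^L`-level set through `ζ` is exactly the orbit of `ζ` under the cotangent lift `Φ̂^R` of
right translations: `J^L` is `Φ̂^R`-invariant, and a covector `η` at `y` is recovered from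
`J^L(η)` by right-translating back, which gives `η = Φ̂^R(ζ, x⁻¹ y)`. Along that orbit `J^R` is
equivariant, `J^R(Φ̂^R(ζ, γ)) = Ad*_{γ⁻¹} J^R(ζ)`, so the `J^R`-level set cuts out exactly the
`γ` in the isotropy group of `J^R(ζ)`. -/

open Manifold

noncomputable section

variable {E : Type*} [NormedAddCommGroup E] [NormedSpace ℝ E]
  {H : Type*} [TopologicalSpace H] (I : ModelWithCorners ℝ E H)
  {G : Type*} [TopologicalSpace G] [ChartedSpace H G] [Group G] [LieGroup I (⊤ : ℕ∞) G]

/-- The momentum map of the lift to `T*G` of the action of `G` on itself by left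
translations: `J^L(ζ) = (T_e R_{π(ζ)})ᵗ (ζ)`, where `R_x` is right translation. -/
def JL (x : G) (ζ : TangentSpace I x →L[ℝ] ℝ) : TangentSpace I (1 : G) →L[ℝ] ℝ :=
  ζ.comp (mfderiv I I (fun y : G => y * x) (1 : G))

/-- The momentum map of the lift to `T*G` of the action of `G` on itself by right
translations: `J^R(ζ) = (T_e L_{π(ζ)})ᵗ (ζ)`, where `L_x` is left translation. -/
def JR (x : G) (ζ : TangentSpace I x →L[ℝ] ℝ) : TangentSpace I (1 : G) →L[ℝ] ℝ :=
  ζ.comp (mfderiv I I (fun y : G => x * y) (1 : G))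

/-- The adjoint representation: `Ad_g = T_e (L_g ∘ R_{g⁻¹}) : 𝔤 → 𝔤`. -/
def Ad (g : G) : TangentSpace I (1 : G) →L[ℝ] TangentSpace I (1 : G) :=
  mfderiv I I (fun y : G => g * y * g⁻¹) (1 : G)

/-- The coadjoint representation: `Ad*_g = (Ad_{g⁻¹})ᵗ : 𝔤* → 𝔤*`. -/
def AdStar (g : G) (ξ : TangentSpace I (1 : G) →L[ℝ] ℝ) :
    TangentSpace I (1 : G) →L[ℝ] ℝ :=
  ξ.comp (Ad I g⁻¹)

/-- The lift to the cotangent bundle `T*G` of the action of `G` on itself by right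
translations: `Φ̂^R(ζ, g) = (T R_{g⁻¹})ᵗ (ζ)`, a covector at `π(ζ)·g`. -/
def PhiR (x : G) (ζ : TangentSpace I x →L[ℝ] ℝ) (g : G) :
    Σ y : G, (TangentSpace I y →L[ℝ] ℝ) :=
  ⟨x * g, ζ.comp (mfderiv I I (fun y : G => y * g⁻¹) (x * g))⟩

/-- The lift to the cotangent bundle `T*G` of the action of `G` on itself by left
translations: `Φ̂^L(g, ζ) = (T L_{g⁻¹})ᵗ (ζ)`, a covector at `g·π(ζ)`. -/
def PhiL (g : G) (x : G) (ζ : TangentSpace I x →L[ℝ] ℝ) :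
    Σ y : G, (TangentSpace I y →L[ℝ] ℝ) :=
  ⟨g * x, ζ.comp (mfderiv I I (fun y : G => g⁻¹ * y) (g * x))⟩

section ChainRule

variable {I} {E' : Type*} [NormedAddCommGroup E'] [NormedSpace ℝ E']
  {H' : Type*} [TopologicalSpace H'] {I' : ModelWithCorners ℝ E' H'}
  {M' : Type*} [TopologicalSpace M'] [ChartedSpace H' M']
  {E'' : Type*} [NormedAddCommGroup E''] [NormedSpace ℝ E'']
  {H'' : Type*} [TopologicalSpace H''] {I'' : ModelWithCorners ℝ E'' H''}
  {M'' : Type*} [TopologicalSpace M''] [ChartedSpace H'' M'']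

lemma mfderiv_comp_mfderiv_of_comp_eq {M : Type*} [TopologicalSpace M] [ChartedSpace H M]
    {f : M' → M''} {g : M → M'} {h : M → M''} (hfg : ∀ z, f (g z) = h z) {x : M} {y : M'}
    (hy : g x = y) (hf : MDifferentiableAt I' I'' f y) (hg : MDifferentiableAt I I' g x) :
    (mfderiv I' I'' f y).comp (mfderiv I I' g x) = mfderiv I I'' h x := by
  subst hy
  exact (mfderiv_comp x hf hg).symm.trans (mfderiv_congr (funext hfg))

lemma comp_mfderiv_comp_mfderiv_of_comp_eq {M : Type*} [TopologicalSpace M] [ChartedSpace H M]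
    {f : M' → M''} {g : M → M'} {h : M → M''} {z : M''} (ℓ : TangentSpace I'' z →L[ℝ] ℝ)
    (hfg : ∀ z, f (g z) = h z) {x : M} {y : M'} (hy : g x = y)
    (hf : MDifferentiableAt I' I'' f y) (hg : MDifferentiableAt I I' g x) :
    (ℓ.comp (mfderiv I' I'' f y)).comp (mfderiv I I' g x) = ℓ.comp (mfderiv I I'' h x) :=
  (ContinuousLinearMap.comp_assoc _ _ _).trans
    (congrArg ℓ.comp (mfderiv_comp_mfderiv_of_comp_eq hfg hy hf hg))

end ChainRule

section TranslationLift

variable {I} {M : Type*} [TopologicalSpace M] [ChartedSpace H M] [Group M]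

lemma Ad_one : Ad I (1 : M) = ContinuousLinearMap.id ℝ (TangentSpace I (1 : M)) :=
  (mfderiv_congr (f' := id) (funext fun z => by simp)).trans mfderiv_id

lemma AdStar_one (ξ : TangentSpace I (1 : M) →L[ℝ] ℝ) : AdStar I (1 : M) ξ = ξ := by
  simp only [AdStar, inv_one, Ad_one, ContinuousLinearMap.comp_id]

variable [ContMDiffMul I 1 M]

lemma mdifferentiable_conj (g : M) : MDifferentiable I I (fun z : M => g * z * g⁻¹) :=
  mdifferentiable_mul_right.comp mdifferentiable_mul_left

lemma Ad_mul (a b : M) : Ad I (a * b) = (Ad I a).comp (Ad I b) :=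
  (mfderiv_comp_mfderiv_of_comp_eq (fun z => by group) (by group)
    (mdifferentiable_conj a 1) (mdifferentiable_conj b 1)).symm

lemma AdStar_mul (a b : M) (ξ : TangentSpace I (1 : M) →L[ℝ] ℝ) :
    AdStar I (a * b) ξ = AdStar I a (AdStar I b ξ) := by
  simp only [AdStar, mul_inv_rev, Ad_mul, ContinuousLinearMap.comp_assoc]

lemma AdStar_inv_eq_self_iff {g : M} {ξ : TangentSpace I (1 : M) →L[ℝ] ℝ} :
    AdStar I g⁻¹ ξ = ξ ↔ AdStar I g ξ = ξ := by
  constructor <;> intro h <;> conv_lhs => rw [← h]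
  · rw [← AdStar_mul, mul_inv_cancel, AdStar_one]
  · rw [← AdStar_mul, inv_mul_cancel, AdStar_one]

lemma JR_eq_AdStar_of_eq_PhiR {x y γ : M} {ζ : TangentSpace I x →L[ℝ] ℝ}
    {η : TangentSpace I y →L[ℝ] ℝ}
    (h : (⟨y, η⟩ : Σ z : M, (TangentSpace I z →L[ℝ] ℝ)) = PhiR I x ζ γ) :
    JR I y η = AdStar I γ⁻¹ (JR I x ζ) := by
  obtain ⟨rfl, hη⟩ := Sigma.mk.inj_iff.1 h
  rw [eq_of_heq hη, JR, JR, AdStar, Ad, inv_inv]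
  exact (comp_mfderiv_comp_mfderiv_of_comp_eq ζ (h := fun z => x * γ * z * γ⁻¹)
    (fun z => by group) (mul_one _) mdifferentiableAt_mul_right mdifferentiableAt_mul_left).trans
    (comp_mfderiv_comp_mfderiv_of_comp_eq ζ (fun z => by group) (by group)
      mdifferentiableAt_mul_left (mdifferentiable_conj γ 1)).symm

lemma JL_eq_iff_exists_eq_PhiR {x y : M} {ζ : TangentSpace I x →L[ℝ] ℝ}
    {η : TangentSpace I y →L[ℝ] ℝ} :
    JL I y η = JL I x ζ ↔ ∃ γ, (⟨y, η⟩ : Σ z : M, (TangentSpace I z →L[ℝ] ℝ)) = PhiR I x ζ γ := by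
  obtain ⟨γ, rfl⟩ : ∃ γ, y = x * γ := ⟨x⁻¹ * y, (mul_inv_cancel_left x y).symm⟩
  constructor
  · intro hL
    refine ⟨γ, congrArg (Sigma.mk (x * γ)) ?_⟩
    calc η = η.comp (mfderiv I I id (x * γ)) := by rw [mfderiv_id]; rfl
      _ = (η.comp (mfderiv I I (· * (x * γ)) 1)).comp (mfderiv I I (· * (x * γ)⁻¹) (x * γ)) :=
          (comp_mfderiv_comp_mfderiv_of_comp_eq η (inv_mul_cancel_right · (x * γ)) (by group)
            mdifferentiableAt_mul_right mdifferentiableAt_mul_right).symm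
      _ = (ζ.comp (mfderiv I I (· * x) 1)).comp (mfderiv I I (· * (x * γ)⁻¹) (x * γ)) :=
          by rw [← JL, hL, JL]
      _ = ζ.comp (mfderiv I I (· * γ⁻¹) (x * γ)) :=
          comp_mfderiv_comp_mfderiv_of_comp_eq ζ (fun z => by group) (by group)
            mdifferentiableAt_mul_right mdifferentiableAt_mul_right
  · rintro ⟨γ', h⟩
    obtain ⟨hγ, hη⟩ := Sigma.mk.inj_iff.1 h
    obtain rfl := mul_left_cancel hγ
    rw [eq_of_heq hη]
    exact comp_mfderiv_comp_mfderiv_of_comp_eq ζ (fun z => by group) (one_mul _)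
      mdifferentiableAt_mul_right mdifferentiableAt_mul_right

end TranslationLift

/-- For `ζ ∈ T*G` (a covector at `x`), the intersection of the level
sets `(J^R)⁻¹(J^R(ζ)) ∩ (J^L)⁻¹(J^L(ζ))` equals
`{ (T R_{γ⁻¹})ᵗ(ζ) : γ ∈ G_{J^R(ζ)} } = { Φ̂^R(ζ, γ) : γ ∈ G_{J^R(ζ)} }`, where
`G_{J^R(ζ)}` is the isotropy subgroup of `J^R(ζ)` for the coadjoint action of `G`
on `𝔤*`. -/
theorem statement8 (x : G) (ζ : TangentSpace I x →L[ℝ] ℝ)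
    (y : G) (η : TangentSpace I y →L[ℝ] ℝ) :
    (JR I y η = JR I x ζ ∧ JL I y η = JL I x ζ)
      ↔ ∃ γ : G, AdStar I γ (JR I x ζ) = JR I x ζ ∧
          (⟨y, η⟩ : Σ z : G, (TangentSpace I z →L[ℝ] ℝ)) = PhiR I x ζ γ := by
  constructor
  · rintro ⟨hR, hL⟩
    obtain ⟨γ, hγ⟩ := JL_eq_iff_exists_eq_PhiR.1 hL
    have hfix : AdStar I γ⁻¹ (JR I x ζ) = JR I x ζ := (JR_eq_AdStar_of_eq_PhiR hγ).symm.trans hR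
    exact ⟨γ, AdStar_inv_eq_self_iff.1 hfix, hγ⟩
  · rintro ⟨γ, hfix, hγ⟩
    exact ⟨(JR_eq_AdStar_of_eq_PhiR hγ).trans (AdStar_inv_eq_self_iff.2 hfix),
      JL_eq_iff_exists_eq_PhiR.2 ⟨γ, hγ⟩⟩

end
end
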